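/- Let w ∈ S_n and let m be a minor of size rank(w^T_{pq})+1 inside the northwest block X_{pq} for some (p,q) ∈ ess(w), and suppose m attends the block X_{p̃q̃} for another (p̃,q̃) ∈ ess(w) via condition (1): the number of row indices of m that are ≤ p̃ is at least rank(w^T_{p̃q̃})+1 and the number of column indices of m that are ≤ q̃ equals rank(w^T_{pq})+1. Then there exists a minor m̃ of size rank(w^T_{p̃q̃})+1 inside X_{p̃q̃} whose anti-diagonal leading term divides the anti-diagonal leading term of m. -/

import Mathlib

/-- `(i,j)` lies in the Rothe diagram `D(w)`: `w i > j` and `w⁻¹ j > i`. -/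
def InRothe {n : ℕ} (w : Equiv.Perm (Fin n)) (i j : Fin n) : Prop :=
  j < w i ∧ i < w.symm j

/-- `(p,q)` lies in the essential set `ess(w)`. -/
def InEss {n : ℕ} (w : Equiv.Perm (Fin n)) (p q : Fin n) : Prop :=
  InRothe w p q ∧ (∀ q' : Fin n, (q' : ℕ) = (q : ℕ) + 1 → ¬ InRothe w p q') ∧
    ∀ p' : Fin n, (p' : ℕ) = (p : ℕ) + 1 → ¬ InRothe w p' q

/-- `rank(w^T_{pq})` (0-based): the number of `i ≤ p` with `w i ≤ q`. -/
def rkNW {n : ℕ} (w : Equiv.Perm (Fin n)) (p q : Fin n) : ℕ :=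
  (Finset.univ.filter fun i => i ≤ p ∧ w i ≤ q).card

/-- let `m` be a minor of size `rank(w^T_{pq}) + 1` inside the
northwest block `X_{pq}` for `(p,q) ∈ ess(w)` (rows `a`, columns `b`), and suppose `m`
attends `X_{p',q'}` for another `(p',q') ∈ ess(w)` via condition (1): at least
`rank(w^T_{p'q'}) + 1` of its row indices are `≤ p'` and all `rank(w^T_{pq}) + 1` of
its column indices are `≤ q'`.  Then there is a minor of size `rank(w^T_{p'q'}) + 1`
inside `X_{p'q'}` whose anti-diagonal leading term divides the anti-diagonal leading
term of `m` (divisibility of monomials is `≤` of exponent vectors). -/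
theorem stmt_19 (n : ℕ) (w : Equiv.Perm (Fin n)) (p q p' q' : Fin n)
    (hpq : InEss w p q) (hp'q' : InEss w p' q') (hne : (p, q) ≠ (p', q'))
    (a : Fin (rkNW w p q + 1) → Fin n) (b : Fin (rkNW w p q + 1) → Fin n)
    (ha : StrictMono a) (hb : StrictMono b)
    (hap : ∀ k, a k ≤ p) (hbq : ∀ k, b k ≤ q)
    (hrow : rkNW w p' q' + 1 ≤ (Finset.univ.filter fun k => a k ≤ p').card)
    (hcol : (Finset.univ.filter fun k => b k ≤ q').card = rkNW w p q + 1) :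
    ∃ (a' b' : Fin (rkNW w p' q' + 1) → Fin n), StrictMono a' ∧ StrictMono b' ∧
      (∀ k, a' k ≤ p') ∧ (∀ k, b' k ≤ q') ∧
      (∑ k : Fin (rkNW w p' q' + 1), Finsupp.single (a' k, b' k.rev) 1 :
          (Fin n × Fin n) →₀ ℕ) ≤
        ∑ k : Fin (rkNW w p q + 1), Finsupp.single (a k, b k.rev) 1 := by
  classical
  have hcardle : (Finset.univ.filter fun k => a k ≤ p').card ≤ rkNW w p q + 1 := by
    simpa using Finset.card_filter_le Finset.univ (fun k => a k ≤ p')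
  have hr'r : rkNW w p' q' + 1 ≤ rkNW w p q + 1 := le_trans hrow hcardle
  have hball : ∀ k, b k ≤ q' := by
    intro k
    have huniv : (Finset.univ.filter fun k => b k ≤ q') = Finset.univ := by
      apply Finset.eq_univ_of_card
      simpa using hcol
    have : k ∈ Finset.univ.filter fun k => b k ≤ q' := by
      rw [huniv]; exact Finset.mem_univ k
    simpa using this
  have hex : ∃ k ∈ Finset.univ.filter (fun k => a k ≤ p'), rkNW w p' q' ≤ (k : ℕ) := by
    by_contra h
    push_neg at h
    have hsub : (Finset.univ.filter fun k => a k ≤ p') ⊆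
        Finset.univ.filter (fun k : Fin (rkNW w p q + 1) => (k : ℕ) < rkNW w p' q') := by
      intro k hk
      simp only [Finset.mem_filter, Finset.mem_univ, true_and] at hk ⊢
      exact h k (by simpa using hk)
    have hc1 := Finset.card_le_card hsub
    have hc2 : (Finset.univ.filter
        (fun k : Fin (rkNW w p q + 1) => (k : ℕ) < rkNW w p' q')).card
        ≤ (Finset.range (rkNW w p' q')).card := by
      exact Finset.card_le_card_of_injOn (fun k => (k : ℕ))
        (fun k hk => by
          simp only [Finset.mem_coe, Finset.mem_filter, Finset.mem_univ, true_and] at hk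
          simpa using hk)
        (fun x _ y _ hxy => Fin.ext hxy)
    rw [Finset.card_range] at hc2
    omega
  obtain ⟨kmax, hkmax, hkmaxval⟩ := hex
  simp only [Finset.mem_filter, Finset.mem_univ, true_and] at hkmax
  have haall : ∀ k : Fin (rkNW w p q + 1), (k : ℕ) ≤ rkNW w p' q' → a k ≤ p' := by
    intro k hk
    exact le_trans (ha.monotone (by rw [Fin.le_def]; omega)) hkmax
  have hbnd : ∀ k : Fin (rkNW w p' q' + 1),
      (k : ℕ) + (rkNW w p q - rkNW w p' q') < rkNW w p q + 1 := fun k => by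
    have := k.isLt; omega
  refine ⟨fun k => a (Fin.castLE hr'r k),
    fun k => b ⟨(k : ℕ) + (rkNW w p q - rkNW w p' q'), hbnd k⟩, ?_, ?_, ?_, ?_, ?_⟩
  · intro i j hij
    exact ha (Fin.strictMono_castLE hr'r hij)
  · intro i j hij
    apply hb
    have hij' : (i : ℕ) < j := hij
    rw [Fin.lt_def]
    exact Nat.add_lt_add_right hij' _
  · intro k
    exact haall _ (by simpa using Nat.lt_succ_iff.mp k.isLt)
  · intro k
    exact hball _
  · have hterm : ∀ k : Fin (rkNW w p' q' + 1),
        ((⟨((Fin.rev k : Fin (rkNW w p' q' + 1)) : ℕ) + (rkNW w p q - rkNW w p' q'),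
          hbnd (Fin.rev k)⟩ : Fin (rkNW w p q + 1))) = Fin.rev (Fin.castLE hr'r k) := by
      intro k
      apply Fin.ext
      have hk : (k : ℕ) ≤ rkNW w p' q' := Nat.lt_succ_iff.mp k.isLt
      have h1 : ((Fin.rev k : Fin (rkNW w p' q' + 1)) : ℕ) = rkNW w p' q' - (k : ℕ) := by
        rw [Fin.val_rev]; omega
      have h2 : ((Fin.rev (Fin.castLE hr'r k)) : ℕ) = rkNW w p q - (k : ℕ) := by
        rw [Fin.val_rev]; simp only [Fin.coe_castLE]; omega
      simp only [h1, h2]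
      omega
    calc (∑ k : Fin (rkNW w p' q' + 1), Finsupp.single
            (a (Fin.castLE hr'r k),
             b ⟨((Fin.rev k : Fin (rkNW w p' q' + 1)) : ℕ) + (rkNW w p q - rkNW w p' q'),
               hbnd (Fin.rev k)⟩) 1 : (Fin n × Fin n) →₀ ℕ)
        = ∑ k : Fin (rkNW w p' q' + 1),
            Finsupp.single (a (Fin.castLE hr'r k), b (Fin.rev (Fin.castLE hr'r k))) 1 :=
          Finset.sum_congr rfl fun k _ => by rw [hterm k]
      _ = ∑ j ∈ Finset.univ.map (Fin.castLEEmb hr'r),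
            Finsupp.single (a j, b (Fin.rev j)) 1 := by
          rw [Finset.sum_map]
          rfl
      _ ≤ ∑ j : Fin (rkNW w p q + 1), Finsupp.single (a j, b (Fin.rev j)) 1 := by
          apply Finset.sum_le_sum_of_subset
          intro x _; exact Finset.mem_univ x
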